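/- Let ℓ be a prime, n ∣ ℓ-1 with n > 1, and χ a character of order n on (ℤ/ℓℤ)*. Then the n-th power of the Gauss sum, G_χ(ζ_ℓ)^n, lies in the ring ℤ[ζ_n]. -/

import Mathlib

/-!
Writing `ψ(a) = ζ^a` for the primitive additive character of `ZMod ℓ`, the sum is the Gauss sum
`g(χ, ψ)`. Multiplying Gauss sums of powers of `χ` produces Jacobi sums, which gives
`g(χ, ψ)^n = χ(-1) ℓ ∏_{i=1}^{n-2} J(χ, χ^i)`, and the right-hand side lies in `ℤ[ζ_n]` because
every value of a character of order `n` is an `n`-th root of unity or zero.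
-/

theorem gaussSum_eq_sum_units {R R' : Type*} [CommRing R] [Fintype R] [Fintype Rˣ] [CommRing R']
    (χ : MulChar R R') (ψ : AddChar R R') :
    gaussSum χ ψ = ∑ u : Rˣ, χ u * ψ u :=
  (Fintype.sum_of_injective Units.val Units.val_injective _ (fun a ↦ χ a * ψ a)
    (fun a ha ↦ by rw [χ.map_nonunit fun hu ↦ ha ⟨hu.unit, rfl⟩, zero_mul])
    fun _ ↦ rfl).symm

theorem gaussSum_pow_orderOf_mem_algebraAdjoin {F R : Type*} [Fintype F] [Field F] [CommRing R]
    [IsDomain R] {χ : MulChar F R} {ψ : AddChar F R} (hχ : 2 ≤ orderOf χ) (hψ : ψ.IsPrimitive)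
    {μ : R} (hμ : IsPrimitiveRoot μ (orderOf χ)) :
    gaussSum χ ψ ^ orderOf χ ∈ Algebra.adjoin ℤ {μ} := by
  have : NeZero (orderOf χ) := ⟨by omega⟩
  have hχ_pow (i : ℕ) : (χ ^ i) ^ orderOf χ = 1 := by
    rw [← pow_mul, mul_comm, pow_mul, pow_orderOf_eq_one, one_pow]
  rw [gaussSum_pow_eq_prod_jacobiSum hχ hψ]
  refine Subalgebra.mul_mem _ (Subalgebra.mul_mem _ ?_ (Subalgebra.natCast_mem _ _)) ?_
  · exact MulChar.apply_mem_algebraAdjoin hμ _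
  · exact Subalgebra.prod_mem _ fun i _ ↦
      jacobiSum_mem_algebraAdjoin_of_pow_eq_one (pow_orderOf_eq_one χ) (hχ_pow i) hμ

theorem gauss_sum_pow_mem_general
    (ℓ n : ℕ) [Fact (Nat.Prime ℓ)] (hn1 : 1 < n)
    (ζ : ℂ) (hζ : IsPrimitiveRoot ζ ℓ)
    (ζn : ℂ) (hζn : IsPrimitiveRoot ζn n)
    (χ : MulChar (ZMod ℓ) ℂ) (hord : orderOf χ = n) :
    (∑ lam : (ZMod ℓ)ˣ, χ lam * ζ ^ ((lam : ZMod ℓ).val)) ^ n ∈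
      Algebra.adjoin ℤ ({ζn} : Set ℂ) := by
  have hsum : ∑ lam : (ZMod ℓ)ˣ, χ lam * ζ ^ ((lam : ZMod ℓ).val) =
      gaussSum χ (AddChar.zmodChar ℓ hζ.pow_eq_one) := by
    simp only [gaussSum_eq_sum_units, AddChar.zmodChar_apply]
  subst hord
  rw [hsum]
  exact gaussSum_pow_orderOf_mem_algebraAdjoin hn1
    (AddChar.zmodChar_primitive_of_primitive_root ℓ hζ) hζn

/-- For a prime `ℓ`, `n ∣ ℓ-1` with `n > 1` and a character `χ` of exact order `n`,
the `n`-th power of the Gauss sum `G_χ(ζ_ℓ)` lies in `ℤ[ζ_n]`. -/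
theorem gauss_sum_pow_mem
    (ℓ n : ℕ) [Fact (Nat.Prime ℓ)] (hn : n ∣ ℓ - 1) (hn1 : 1 < n)
    (ζ : ℂ) (hζ : IsPrimitiveRoot ζ ℓ)
    (ζn : ℂ) (hζn : IsPrimitiveRoot ζn n)
    (χ : MulChar (ZMod ℓ) ℂ) (hord : orderOf χ = n) :
    (∑ lam : (ZMod ℓ)ˣ, χ lam * ζ ^ ((lam : ZMod ℓ).val)) ^ n ∈
      Algebra.adjoin ℤ ({ζn} : Set ℂ) :=
  gauss_sum_pow_mem_general ℓ n hn1 ζ hζ ζn hζn χ hord
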